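/- In TL(B_2)_ε, the elements U₁ + εq^{-ε} and s₀ satisfy the reflection equation: (s₀)(U₁+εq^{-ε})(s₀)(U₁+εq^{-ε}) = (U₁+εq^{-ε})(s₀)(U₁+εq^{-ε})(s₀). -/

import Mathlib

/-! Since `U₁s₀U₁ = 0`, both `s₀U₁s₀U₁` and `U₁s₀U₁s₀` vanish, and with `s₀² = 1` both sides of
the reflection equation expand to `c s₀U₁s₀ + c U₁ + c²`, where `c = εq^{-ε}`; this holds for every
scalar `c`. -/

noncomputable section

abbrev Kq : Type := RatFunc ℂ

def qq : Kq := RatFunc.X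

/-- The quantum integer `[m] = (q^m - q^{-m})/(q - q⁻¹)` in `ℂ(q)`. -/
def qint (m : ℤ) : Kq := (qq ^ m - qq ^ (-m)) / (qq - qq⁻¹)

/-- Generators of the type `B` Temperley–Lieb algebra: `none` is `s₀`, and
`some i` is the cup-cap generator `U_{i+1}`. -/
def g : Option ℕ → FreeAlgebra Kq (Option ℕ) := FreeAlgebra.ι Kq

/-- The defining relations of the (specialized) type `B` Temperley–Lieb
algebra (on infinitely many strands, so that `TL(B_n)` sits inside for
every `n`): `U_i² = -ε(q+q⁻¹)U_i`, distant commutativity,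
`U_i U_{i±1} U_i = U_i`, `s₀² = 1`, `U₁ s₀ U₁ = 0` and `s₀ U_i = U_i s₀`
for `i ≥ 2`.  (Recall `some i` stands for `U_{i+1}`.) -/
inductive TLBRel (ε : Kq) : FreeAlgebra Kq (Option ℕ) → FreeAlgebra Kq (Option ℕ) → Prop
  | Usq (i : ℕ) :
      TLBRel ε (g (some i) * g (some i)) ((-(ε * (qq + qq⁻¹))) • g (some i))
  | Ucomm (i j : ℕ) (h : i + 2 ≤ j) :
      TLBRel ε (g (some i) * g (some j)) (g (some j) * g (some i))
  | Ubraid1 (i : ℕ) :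
      TLBRel ε (g (some i) * g (some (i+1)) * g (some i)) (g (some i))
  | Ubraid2 (i : ℕ) :
      TLBRel ε (g (some (i+1)) * g (some i) * g (some (i+1))) (g (some (i+1)))
  | s0sq : TLBRel ε (g none * g none) 1
  | UsU : TLBRel ε (g (some 0) * g none * g (some 0)) 0
  | scomm (i : ℕ) (h : 1 ≤ i) :
      TLBRel ε (g none * g (some i)) (g (some i) * g none)

/-- The (specialized) type `B` Temperley–Lieb algebra `TL(B)_ε` (on
infinitely many strands). -/
abbrev TLB (ε : Kq) := RingQuot (TLBRel ε)

/-- The generator `s₀` of `TL(B)_ε`. -/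
def s0 (ε : Kq) : TLB ε := RingQuot.mkAlgHom Kq (TLBRel ε) (g none)

/-- The generator `U_i` of `TL(B)_ε`, for `i ≥ 1`. -/
def UU (ε : Kq) (i : ℕ) : TLB ε := RingQuot.mkAlgHom Kq (TLBRel ε) (g (some (i - 1)))

/-- The subalgebra `TL(B_n)_ε ⊆ TL(B)_ε`, generated by `s₀, U₁, …, U_{n-1}`. -/
def TLBsub (ε : Kq) (n : ℕ) : Subalgebra Kq (TLB ε) :=
  Algebra.adjoin Kq ({s0 ε} ∪ {x | ∃ i, 1 ≤ i ∧ i ≤ n - 1 ∧ x = UU ε i})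

/-- The type `D` generators: `UD 0 = U₀ = s₀U₁s₀` and `UD i = U_i` for `i ≥ 1`. -/
def UD (ε : Kq) (i : ℕ) : TLB ε :=
  if i = 0 then s0 ε * UU ε 1 * s0 ε else UU ε i

/-- The subalgebra `TL(D_n)_ε ⊆ TL(B)_ε`, generated by `U₀, U₁, …, U_{n-1}`. -/
def TLDsub (ε : Kq) (n : ℕ) : Subalgebra Kq (TLB ε) :=
  Algebra.adjoin Kq {x | ∃ i ≤ n - 1, x = UD ε i}

/-- The type `B_n` Jones–Wenzl projectors `b_{n,η,ε}` (for `η = ±1`), defined by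
`b_{1,η,ε} = (1 + η s₀)/2` and the recursion
`b_{n+1,η,ε} = b_{n,η,ε} + ε (q^{n-1}+q^{-(n-1)})/(q^n+q^{-n}) · b_{n,η,ε} U_n b_{n,η,ε}`. -/
def bB (ε η : Kq) : ℕ → TLB ε
  | 0 => 1
  | 1 => (2 : Kq)⁻¹ • (1 + η • s0 ε)
  | (n+2) =>
      bB ε η (n+1) +
        (ε * (qq ^ n + qq⁻¹ ^ n) / (qq ^ (n+1) + qq⁻¹ ^ (n+1))) •
          (bB ε η (n+1) * UU ε (n+1) * bB ε η (n+1))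

/-- The type `D_n` Jones–Wenzl projector `d_{n,ε} = b_{n,+,ε} + b_{n,-,ε}`. -/
def dD (ε : Kq) (n : ℕ) : TLB ε := bB ε 1 n + bB ε (-1) n

theorem reflection_equation_of_mul_mul_eq_zero {K A : Type*} [CommSemiring K] [Ring A]
    [Algebra K A] {s U : A} (hs : s * s = 1) (hU : U * s * U = 0) (c : K) :
    s * (U + algebraMap K A c) * s * (U + algebraMap K A c) =
      (U + algebraMap K A c) * s * (U + algebraMap K A c) * s := by
  have hUsU : U * (s * U) = 0 := by rw [← mul_assoc, hU]
  simp only [Algebra.algebraMap_eq_smul_one, mul_add, add_mul, smul_mul_assoc, mul_smul_comm,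
    one_mul, mul_one, mul_assoc, hs, hUsU, mul_zero, zero_mul, smul_add]
  abel

theorem s0_mul_s0 (ε : Kq) : s0 ε * s0 ε = 1 := by
  simpa [s0] using RingQuot.mkAlgHom_rel Kq (TLBRel.s0sq (ε := ε))

theorem UU_one_mul_s0_mul_UU_one (ε : Kq) : UU ε 1 * s0 ε * UU ε 1 = 0 := by
  simpa [UU, s0] using RingQuot.mkAlgHom_rel Kq (TLBRel.UsU (ε := ε))

theorem stmt10_general (ε : ℤ) (H : TLB (ε : Kq))
    (hH : H = UU (ε : Kq) 1 + algebraMap Kq (TLB (ε : Kq)) ((ε : Kq) * qq ^ (-ε))) :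
    s0 (ε : Kq) * H * s0 (ε : Kq) * H = H * s0 (ε : Kq) * H * s0 (ε : Kq) := by
  subst hH
  exact reflection_equation_of_mul_mul_eq_zero (s0_mul_s0 _) (UU_one_mul_s0_mul_UU_one _) _

theorem stmt10 (ε : ℤ) (hε : ε = 1 ∨ ε = -1) (H : TLB (ε : Kq))
    (hH : H = UU (ε : Kq) 1 + algebraMap Kq (TLB (ε : Kq)) ((ε : Kq) * qq ^ (-ε))) :
    s0 (ε : Kq) * H * s0 (ε : Kq) * H = H * s0 (ε : Kq) * H * s0 (ε : Kq) :=
  stmt10_general ε H hH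

end
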